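/- arXiv:0803.3529 — 2 statements merged into one kernel-verified Lean document; each statement's English description precedes it below -/
import Mathlib

section
/- (Ramanathan–Steger comparison) Let G be a locally compact Hausdorff abelian topological group (written additively), let Γ and Λ be uniformly discrete subsets of G, and let H be a complex Hilbert space. Suppose {g_γ}_{γ∈Γ} is a family in H satisfying the Riesz-sequence inequalities with lower bound A > 0 and some upper bound B > 0, i.e. A ∑_γ |a_γ|² ≤ ‖∑_γ a_γ g_γ‖² ≤ B ∑_γ |a_γ|² for every finitely supported family (a_γ) of complex numbers. Let ε > 0, let K ⊆ G be compact, and let {h_λ}_{λ∈Λ} be a family in H such that dist_H(g_γ, span{h_λ : λ ∈ Λ ∩ (γ + K)}) < ε for every γ ∈ Γ. Then for every compact set L ⊆ G one has (1 - A^{-1/2} ε) · card(Γ ∩ L) ≤ card(Λ ∩ (L + K)). -/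
/-! Let `g̃_γ`, `γ ∈ Γ ∩ L`, be the family dual to the `g_γ` inside their span `V`; the lower
Riesz bound gives `‖g̃_γ‖ ≤ A^{-1/2}`. For `γ ∈ L` every span in the hypothesis lies in
`W = span {h_λ : λ ∈ Λ ∩ (L + K)}`, so with `P` the orthogonal projection onto `W`,
`Re ⟪g̃_γ, P g_γ⟫ = 1 - Re ⟪g̃_γ, g_γ - P g_γ⟫ ≥ 1 - ε A^{-1/2}`. Expanding `P` in an orthonormal
basis `(e_k)` of `W` turns `∑_γ ⟪g̃_γ, P g_γ⟫` into `∑_k ⟪e_k, Q e_k⟫`, with `Q` the orthogonal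
projection onto `V`, and its real part is at most `dim W ≤ card (Λ ∩ (L + K))`. Uniform
discreteness only serves to make both index sets finite. -/

open Pointwise
open scoped InnerProductSpace

noncomputable section

def UnifDiscrete {G : Type*} [AddGroup G] [TopologicalSpace G] (Λ : Set G) : Prop :=
  ∃ U : Set G, IsOpen U ∧ (0:G) ∈ U ∧ Λ.PairwiseDisjoint (fun x => x +ᵥ U)

theorem UnifDiscrete.finite_inter_of_isCompact {G : Type*} [AddCommGroup G] [TopologicalSpace G]
    [IsTopologicalAddGroup G] {Λ C : Set G} (hΛ : UnifDiscrete Λ) (hC : IsCompact C) :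
    (Λ ∩ C).Finite := by
  obtain ⟨U, hUo, hU0, hdisj⟩ := hΛ
  obtain ⟨V, hV, hVU⟩ := exists_nhds_half_neg (hUo.mem_nhds hU0)
  have hsubsingleton : ∀ x : G, (Λ ∩ (x +ᵥ V)).Subsingleton := by
    rintro x a ⟨haΛ, a', ha', rfl⟩ b ⟨hbΛ, b', hb', rfl⟩
    by_contra hne
    refine Set.disjoint_left.mp (hdisj haΛ hbΛ hne) ⟨0, hU0, add_zero _⟩
      ⟨a' - b', hVU _ ha' _ hb', ?_⟩
    simp only [vadd_eq_add]
    abel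
  obtain ⟨t, -, hCt⟩ := hC.elim_nhds_subcover (fun x => x +ᵥ V) fun x _ => by
    simpa using (vadd_mem_nhds_vadd_iff x).mpr hV
  refine (t.finite_toSet.biUnion fun x _ => (hsubsingleton x).finite).subset ?_
  rintro y ⟨hyΛ, hyC⟩
  obtain ⟨x, hx, hyx⟩ := Set.mem_iUnion₂.mp (hCt hyC)
  exact Set.mem_iUnion₂.mpr ⟨x, hx, hyΛ, hyx⟩

theorem Submodule.norm_sub_starProjection_eq_infDist {𝕜 E : Type*} [RCLike 𝕜]
    [NormedAddCommGroup E] [InnerProductSpace 𝕜 E] (K : Submodule 𝕜 E)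
    [K.HasOrthogonalProjection] (x : E) : ‖x - K.starProjection x‖ = Metric.infDist x K := by
  rw [Submodule.starProjection_minimal, Metric.infDist_eq_iInf]
  simp [dist_eq_norm]

theorem finrank_span_image_le_ncard {K M α : Type*} [DivisionRing K] [AddCommGroup M]
    [Module K M] (f : α → M) {s : Set α} (hs : s.Finite) :
    Module.finrank K (Submodule.span K (f '' s)) ≤ s.ncard := by
  have := (hs.image f).fintype
  calc Module.finrank K (Submodule.span K (f '' s)) ≤ (f '' s).toFinset.card :=
        finrank_span_le_card _
    _ = (f '' s).ncard := (Set.ncard_eq_toFinset_card' _).symm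
    _ ≤ s.ncard := Set.ncard_image_le hs

section RieszLowerBound

variable {𝕜 E ι : Type*} [RCLike 𝕜] [NormedAddCommGroup E] [InnerProductSpace 𝕜 E] [Fintype ι]
  {v : ι → E} {A : ℝ}

theorem riesz_lower_comp_embedding {κ : Type*} {g : κ → E}
    (hg : ∀ (s : Finset κ) (a : κ → 𝕜), A * ∑ γ ∈ s, ‖a γ‖ ^ 2 ≤ ‖∑ γ ∈ s, a γ • g γ‖ ^ 2)
    (f : ι ↪ κ) (c : ι → 𝕜) : A * ∑ i, ‖c i‖ ^ 2 ≤ ‖∑ i, c i • g (f i)‖ ^ 2 := by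
  simpa [f.injective.extend_apply] using hg (Finset.univ.map f) (Function.extend f c 0)

theorem sqrt_mul_norm_le_of_riesz_lower
    (hv : ∀ c : ι → 𝕜, A * ∑ i, ‖c i‖ ^ 2 ≤ ‖∑ i, c i • v i‖ ^ 2) (c : ι → 𝕜) (i : ι) :
    √A * ‖c i‖ ≤ ‖∑ j, c j • v j‖ := by
  rcases le_or_gt A 0 with hA | hA
  · rw [Real.sqrt_eq_zero'.mpr hA, zero_mul]; positivity
  have hi : A * ‖c i‖ ^ 2 ≤ ‖∑ j, c j • v j‖ ^ 2 :=
    (mul_le_mul_of_nonneg_left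
      (Finset.single_le_sum (f := fun j => ‖c j‖ ^ 2) (fun j _ => by positivity)
        (Finset.mem_univ i)) hA.le).trans (hv c)
  rw [← Real.sqrt_sq (norm_nonneg (∑ j, c j • v j)), ← Real.sqrt_sq (norm_nonneg (c i)),
    ← Real.sqrt_mul hA.le]
  exact Real.sqrt_le_sqrt hi

theorem linearIndependent_of_riesz_lower (hA : 0 < A)
    (hv : ∀ c : ι → 𝕜, A * ∑ i, ‖c i‖ ^ 2 ≤ ‖∑ i, c i • v i‖ ^ 2) : LinearIndependent 𝕜 v := by
  refine Fintype.linearIndependent_iff.mpr fun c hc i => ?_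
  have := sqrt_mul_norm_le_of_riesz_lower hv c i
  rw [hc, norm_zero] at this
  exact norm_eq_zero.mp (le_antisymm (nonpos_of_mul_nonpos_right this (Real.sqrt_pos.mpr hA))
    (norm_nonneg _))

theorem exists_dual_family_of_riesz_lower (hA : 0 < A)
    (hv : ∀ c : ι → 𝕜, A * ∑ i, ‖c i‖ ^ 2 ≤ ‖∑ i, c i • v i‖ ^ 2) :
    ∃ w : ι → E, (∀ i, ⟪w i, v i⟫_𝕜 = 1) ∧ (∀ i, ‖w i‖ ≤ 1 / √A) ∧
      ∀ x, ‖∑ i, ⟪w i, x⟫_𝕜 • v i‖ ≤ ‖x‖ := by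
  set V := Submodule.span 𝕜 (Set.range v)
  have : FiniteDimensional 𝕜 V := .span_of_finite 𝕜 (Set.finite_range v)
  let b : Module.Basis ι 𝕜 V := .span (linearIndependent_of_riesz_lower hA hv)
  have hb : ∀ i, (b i : E) = v i := fun i => congrArg Subtype.val (Module.Basis.span_apply _ i)
  have hb_sum : ∀ x : V, ∑ i, b.repr x i • v i = x := fun x => by
    conv_rhs => rw [← b.sum_repr x]
    simp only [Submodule.coe_sum, SetLike.val_smul, hb]
  let w : ι → V := fun i => (InnerProductSpace.toDual 𝕜 V).symm (b.coord i).toContinuousLinearMap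
  have hw : ∀ i (x : V), ⟪(w i : E), x⟫_𝕜 = b.repr x i := fun i x => by
    rw [← Submodule.coe_inner]
    simp [w]
  refine ⟨fun i => w i, fun i => ?_, fun i => ?_, fun x => ?_⟩
  · simpa [hb] using hw i (b i)
  · have hsq : ‖(w i : E)‖ ^ 2 = ‖b.repr (w i) i‖ := by
      rw [← hw, inner_self_eq_norm_sq_to_K, norm_pow, RCLike.norm_ofReal, abs_norm]
    have := sqrt_mul_norm_le_of_riesz_lower hv (b.repr (w i)) i
    rw [hb_sum, ← hsq] at this
    have hsqrt := Real.sqrt_pos.mpr hA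
    rw [le_div_iff₀ hsqrt]
    nlinarith [norm_nonneg (w i : E)]
  · -- `w i ∈ V`, so `⟪w i, x⟫` is the `i`-th coordinate of the projection of `x` onto `V`
    have hproj : ∑ i, ⟪(w i : E), x⟫_𝕜 • v i = V.starProjection x := by
      rw [Submodule.starProjection_apply, ← hb_sum (V.orthogonalProjectionOnto x)]
      congr! 2 with i
      rw [← hw, ← Submodule.inner_orthogonalProjectionOnto_eq_of_mem_left, Submodule.coe_inner]
    exact hproj ▸ V.norm_starProjection_apply_le x

theorem sum_inner_starProjection_eq_sum_inner {κ : Type*} [Fintype κ] (W : Submodule 𝕜 E)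
    [W.HasOrthogonalProjection] (e : OrthonormalBasis κ 𝕜 W) (w : ι → E) :
    ∑ i, ⟪w i, W.starProjection (v i)⟫_𝕜 = ∑ k, ⟪(e k : E), ∑ i, ⟪w i, e k⟫_𝕜 • v i⟫_𝕜 := by
  simp only [Submodule.starProjection_apply, e.orthogonalProjectionOnto_apply_eq_sum,
    Submodule.coe_sum, SetLike.val_smul, inner_sum, inner_smul_right]
  rw [Finset.sum_comm]
  exact Finset.sum_congr rfl fun k _ => Finset.sum_congr rfl fun i _ => mul_comm _ _

theorem mul_card_le_finrank_of_riesz_lower (hA : 0 < A)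
    (hv : ∀ c : ι → 𝕜, A * ∑ i, ‖c i‖ ^ 2 ≤ ‖∑ i, c i • v i‖ ^ 2) {ε : ℝ}
    (W : Submodule 𝕜 E) [FiniteDimensional 𝕜 W] (hclose : ∀ i, Metric.infDist (v i) W < ε) :
    (1 - ε / √A) * Fintype.card ι ≤ Module.finrank 𝕜 W := by
  obtain ⟨w, hwv, hw_norm, hw_contr⟩ := exists_dual_family_of_riesz_lower hA hv
  have hdiag : ∀ i, 1 - ε / √A ≤ RCLike.re ⟪w i, W.starProjection (v i)⟫_𝕜 := fun i => by
    have hdist : ‖v i - W.starProjection (v i)‖ ≤ ε := by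
      rw [W.norm_sub_starProjection_eq_infDist]
      exact (hclose i).le
    have herr : ‖w i‖ * ‖v i - W.starProjection (v i)‖ ≤ ε / √A :=
      calc ‖w i‖ * ‖v i - W.starProjection (v i)‖ ≤ 1 / √A * ε := by gcongr; exact hw_norm i
        _ = ε / √A := one_div_mul_eq_div _ _
    have := re_inner_le_norm (𝕜 := 𝕜) (w i) (v i - W.starProjection (v i))
    rw [inner_sub_right, hwv, map_sub, RCLike.one_re] at this
    linarith
  have htrace : RCLike.re (∑ i, ⟪w i, W.starProjection (v i)⟫_𝕜) ≤ Module.finrank 𝕜 W := by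
    let e := stdOrthonormalBasis 𝕜 W
    rw [sum_inner_starProjection_eq_sum_inner W e, map_sum]
    calc ∑ k, RCLike.re ⟪(e k : E), ∑ i, ⟪w i, e k⟫_𝕜 • v i⟫_𝕜
        ≤ ∑ _k, (1 : ℝ) := Finset.sum_le_sum fun k _ => by
          have he : ‖(e k : E)‖ = 1 := e.orthonormal.1 k
          refine (re_inner_le_norm _ _).trans ?_
          rw [he, one_mul, ← he]
          exact hw_contr (e k)
      _ = Module.finrank 𝕜 W := by simp
  calc (1 - ε / √A) * Fintype.card ι
        = ∑ _i : ι, (1 - ε / √A) := by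
          rw [Finset.sum_const, Finset.card_univ, nsmul_eq_mul, mul_comm]
    _ ≤ ∑ i, RCLike.re ⟪w i, W.starProjection (v i)⟫_𝕜 := Finset.sum_le_sum fun i _ => hdiag i
    _ = RCLike.re (∑ i, ⟪w i, W.starProjection (v i)⟫_𝕜) := (map_sum _ _ _).symm
    _ ≤ Module.finrank 𝕜 W := htrace

end RieszLowerBound

theorem ramanathan_steger_comparison_general
    (G : Type) [AddCommGroup G] [TopologicalSpace G] [IsTopologicalAddGroup G]
    (H : Type) [NormedAddCommGroup H] [InnerProductSpace ℂ H]
    (Γ Λ : Set G) (hΓ : UnifDiscrete Γ) (hΛ : UnifDiscrete Λ)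
    (g : Γ → H) (A B : ℝ) (hA : 0 < A)
    (hRiesz : ∀ (s : Finset Γ) (a : Γ → ℂ),
      A * ∑ γ ∈ s, ‖a γ‖ ^ 2 ≤ ‖∑ γ ∈ s, a γ • g γ‖ ^ 2 ∧
      ‖∑ γ ∈ s, a γ • g γ‖ ^ 2 ≤ B * ∑ γ ∈ s, ‖a γ‖ ^ 2)
    (ε : ℝ) (K : Set G) (hK : IsCompact K)
    (h : Λ → H)
    (hclose : ∀ γ : Γ, Metric.infDist (g γ)
      (Submodule.span ℂ (h '' {l : Λ | (l : G) ∈ (γ : G) +ᵥ K}) : Set H) < ε) :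
    ∀ L : Set G, IsCompact L →
      (1 - ε / Real.sqrt A) * ((Γ ∩ L).ncard : ℝ) ≤ ((Λ ∩ (L + K)).ncard : ℝ) := by
  intro L hL
  have := (hΓ.finite_inter_of_isCompact hL).fintype
  set S : Set Λ := {l : Λ | (l : G) ∈ L + K}
  have hS_image : Subtype.val '' S = Λ ∩ (L + K) := Subtype.image_preimage_coe Λ (L + K)
  have hS : S.Finite := Set.Finite.of_finite_image
    (hS_image ▸ hΛ.finite_inter_of_isCompact (hL.add hK)) Subtype.val_injective.injOn
  set W := Submodule.span ℂ (h '' S)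
  have : FiniteDimensional ℂ W := .span_of_finite ℂ (hS.image h)
  let f : ↥(Γ ∩ L) ↪ Γ := ⟨Set.inclusion Set.inter_subset_left, Set.inclusion_injective _⟩
  have hspan : ∀ x : ↥(Γ ∩ L),
      (Submodule.span ℂ (h '' {l : Λ | (l : G) ∈ (f x : G) +ᵥ K}) : Set H) ⊆ W := by
    intro x
    refine Submodule.span_mono (Set.image_mono ?_)
    rintro l ⟨k, hk, hlk⟩
    show (l : G) ∈ L + K
    rw [← hlk]
    exact Set.add_mem_add x.2.2 hk
  have hcomparison := mul_card_le_finrank_of_riesz_lower hA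
    (riesz_lower_comp_embedding (fun s a => (hRiesz s a).1) f) W fun x =>
      (Metric.infDist_le_infDist_of_subset (hspan x) ⟨0, Submodule.zero_mem _⟩).trans_lt
        (hclose (f x))
  calc (1 - ε / √A) * ((Γ ∩ L).ncard : ℝ) = (1 - ε / √A) * Fintype.card ↥(Γ ∩ L) := by
        rw [Set.ncard_eq_toFinset_card', Set.toFinset_card]
    _ ≤ Module.finrank ℂ W := hcomparison
    _ ≤ S.ncard := by exact_mod_cast finrank_span_image_le_ncard h hS
    _ = (Λ ∩ (L + K)).ncard := by
      rw [← hS_image, Set.ncard_image_of_injective S Subtype.val_injective]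

/-- The Ramanathan–Steger comparison principle. -/
theorem ramanathan_steger_comparison
    (G : Type) [AddCommGroup G] [TopologicalSpace G] [IsTopologicalAddGroup G]
    [LocallyCompactSpace G] [T2Space G]
    (H : Type) [NormedAddCommGroup H] [InnerProductSpace ℂ H] [CompleteSpace H]
    (Γ Λ : Set G) (hΓ : UnifDiscrete Γ) (hΛ : UnifDiscrete Λ)
    (g : Γ → H) (A B : ℝ) (hA : 0 < A) (hB : 0 < B)
    (hRiesz : ∀ (s : Finset Γ) (a : Γ → ℂ),
      A * ∑ γ ∈ s, ‖a γ‖ ^ 2 ≤ ‖∑ γ ∈ s, a γ • g γ‖ ^ 2 ∧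
      ‖∑ γ ∈ s, a γ • g γ‖ ^ 2 ≤ B * ∑ γ ∈ s, ‖a γ‖ ^ 2)
    (ε : ℝ) (hε : 0 < ε) (K : Set G) (hK : IsCompact K)
    (h : Λ → H)
    (hclose : ∀ γ : Γ, Metric.infDist (g γ)
      (Submodule.span ℂ (h '' {l : Λ | (l : G) ∈ (γ : G) +ᵥ K}) : Set H) < ε) :
    ∀ L : Set G, IsCompact L →
      (1 - ε / Real.sqrt A) * ((Γ ∩ L).ncard : ℝ) ≤ ((Λ ∩ (L + K)).ncard : ℝ) :=
  ramanathan_steger_comparison_general G H Γ Λ hΓ hΛ g A B hA hRiesz ε K hK h hclose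
end
end

section
/- Let G = ℝ^d × 𝕋^m × D, where 𝕋 = ℝ/ℤ and D is a countable discrete abelian group, and assume G is non-compact (i.e. d ≥ 1 or D is infinite). Let Γ₀ = ℤ^d × {0} × D ⊆ G. Then for every uniformly discrete set Λ ⊆ G one has D⁻(Λ) ≤ D⁺(Λ) < ∞, where D⁻(Λ) = sup{α ≥ 0 : αΓ₀ ⪯ Λ} and D⁺(Λ) = inf{α ≥ 0 : Λ ⪯ αΓ₀} (with D⁺(Λ) = ∞ if no such α exists). -/
open MeasureTheory Pointwise

noncomputable section

/-- The group `G = ℝ^d × 𝕋^m × D`. -/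
abbrev GrpG (d m : ℕ) (D : Type) := (Fin d → ℝ) × (Fin m → AddCircle (1:ℝ)) × D

/-- The canonical lattice `Γ₀ = ℤ^d × {0} × D ⊆ G`. -/
def canonicalLattice (d m : ℕ) (D : Type) [AddCommGroup D] : Set (GrpG d m D) :=
  {p | (∀ i, ∃ n : ℤ, p.1 i = (n : ℝ)) ∧ p.2.1 = 0}

/-- The comparison relation `α Γ₀ ⪯ Λ`. -/
def LowerRel (d m : ℕ) (D : Type) [AddCommGroup D] [TopologicalSpace D]
    (Λ : Set (GrpG d m D)) (α : ℝ) : Prop :=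
  ∀ ε > (0:ℝ), ∃ K : Set (GrpG d m D), IsCompact K ∧ ∀ L : Set (GrpG d m D), IsCompact L →
    (1 - ε) * α * ((canonicalLattice d m D ∩ L).ncard : ℝ) ≤ ((Λ ∩ (K + L)).ncard : ℝ)

/-- The comparison relation `Λ ⪯ α Γ₀`. -/
def UpperRel (d m : ℕ) (D : Type) [AddCommGroup D] [TopologicalSpace D]
    (Λ : Set (GrpG d m D)) (α : ℝ) : Prop :=
  ∀ ε > (0:ℝ), ∃ K : Set (GrpG d m D), IsCompact K ∧ ∀ L : Set (GrpG d m D), IsCompact L →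
    (1 - ε) * ((Λ ∩ L).ncard : ℝ) ≤ α * ((canonicalLattice d m D ∩ (K + L)).ncard : ℝ)


open Filter Topology

/-!
Covering `G` by the translates `γ + C`, `γ ∈ Γ₀`, of the compact cell `C = [0,1]^d × 𝕋^m × {0}`
gives `Λ ⪯ NΓ₀`, where `N` bounds the number of points of `Λ` in a translate of `C`.
If `αΓ₀ ⪯ Λ ⪯ βΓ₀` with `α > β`, composing the two comparisons gives a compact `K` and
`c > β` with `c · #(Γ₀ ∩ L) ≤ β · #(Γ₀ ∩ (K + L))` for all compact `L`. Iterating along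
`L = n • K` makes `#(Γ₀ ∩ n • K)` grow like `(c / β)^n`, whereas it grows only polynomially:
the `ℝ^d`-part of `n • K` lies in a ball of radius `O(n)`, and its `D`-part in the `n`-fold
sumset of a finite set.
-/

theorem IsCompact.nsmul {M : Type*} [AddMonoid M] [TopologicalSpace M] [ContinuousAdd M]
    {K : Set M} (hK : IsCompact K) : ∀ n : ℕ, IsCompact (n • K)
  | 0 => by rw [zero_nsmul]; exact isCompact_singleton
  | n + 1 => by rw [succ_nsmul']; exact hK.add (hK.nsmul n)

theorem Finset.card_nsmul_le_succ_pow_card {M : Type*} [AddCommMonoid M] [DecidableEq M]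
    (s : Finset M) (n : ℕ) : (n • s).card ≤ (n + 1) ^ s.card := by
  have hsub : n • s ⊆ (Fintype.piFinset fun _ : s => range (n + 1)).image
      fun c => ∑ x : s, c x • (x : M) := by
    induction n with
    | zero =>
      intro x hx
      rw [zero_nsmul, Finset.mem_zero] at hx
      exact mem_image.mpr ⟨fun _ => 0, by simp, by simp [hx]⟩
    | succ n ih =>
      rw [succ_nsmul']
      intro x hx
      obtain ⟨a, ha, y, hy, rfl⟩ := mem_add.mp hx
      obtain ⟨c, hc, rfl⟩ := mem_image.mp (ih hy)
      refine mem_image.mpr ⟨c + Pi.single ⟨a, ha⟩ 1, Fintype.mem_piFinset.mpr fun x => ?_, ?_⟩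
      · have hcx := mem_range.mp (Fintype.mem_piFinset.mp hc x)
        rw [mem_range, Pi.add_apply, Pi.single_apply]
        split_ifs <;> omega
      · simp only [Pi.add_apply, add_smul, sum_add_distrib, Pi.single_apply, ite_smul,
          one_smul, zero_smul]
        rw [sum_ite_eq', if_pos (mem_univ _), add_comm]
  calc (n • s).card ≤ (Fintype.piFinset fun _ : s => range (n + 1)).card :=
        (card_le_card hsub).trans card_image_le
    _ = (n + 1) ^ s.card := by simp [Fintype.card_piFinset]

theorem le_of_mul_le_mul_succ_of_le_mul_pow {a : ℕ → ℝ} {c β A : ℝ} {P : ℕ} (ha₀ : 0 < a 0)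
    (hβ : 0 ≤ β) (hstep : ∀ n, c * a n ≤ β * a (n + 1)) (hpoly : ∀ n, a n ≤ A * (n + 1) ^ P) :
    c ≤ β := by
  by_contra! hβc
  have hc : 0 < c := hβ.trans_lt hβc
  have hβ₀ : 0 < β := by
    refine hβ.lt_of_ne' fun h => ?_
    have := hstep 0
    rw [h, zero_mul] at this
    exact (mul_pos hc ha₀).not_ge this
  set r := c / β
  have hr : 1 < r := (one_lt_div hβ₀).mpr hβc
  have hgeom : ∀ n, r ^ n * a 0 ≤ a n := by
    intro n
    induction n with
    | zero => simp
    | succ n ih =>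
      calc r ^ (n + 1) * a 0 = r * (r ^ n * a 0) := by ring
        _ ≤ r * a n := by gcongr
        _ ≤ a (n + 1) := by rw [div_mul_eq_mul_div, div_le_iff₀ hβ₀]; linarith [hstep n]
  have hbound : ∀ n : ℕ, a 0 ≤ A * r * (((n + 1 : ℕ) : ℝ) ^ P / r ^ (n + 1)) := fun n => by
    have hrn : 0 < r ^ n := pow_pos (by linarith) n
    calc a 0 ≤ A * (n + 1) ^ P / r ^ n := by
          rw [le_div_iff₀ hrn, mul_comm]; exact (hgeom n).trans (hpoly n)
      _ = A * r * (((n + 1 : ℕ) : ℝ) ^ P / r ^ (n + 1)) := by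
          rw [pow_succ]; push_cast; field_simp
  have hlim : Tendsto (fun n : ℕ => A * r * (((n + 1 : ℕ) : ℝ) ^ P / r ^ (n + 1))) atTop
      (𝓝 (A * r * 0)) :=
    ((tendsto_pow_const_div_const_pow_of_one_lt P hr).comp (tendsto_add_atTop_nat 1)).const_mul _
  exact ha₀.not_ge ((ge_of_tendsto' hlim hbound).trans_eq (mul_zero _))

section UniformlyDiscrete

variable {G : Type*} [AddCommGroup G] [TopologicalSpace G] [IsTopologicalAddGroup G]
  {Λ : Set G}

theorem UnifDiscrete.exists_mem_nhds_subsingleton (hΛ : UnifDiscrete Λ) :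
    ∃ V ∈ 𝓝 (0 : G), ∀ y : G, (Λ ∩ (y +ᵥ V)).Subsingleton := by
  obtain ⟨U, hU, hU0, hdisj⟩ := hΛ
  have hsub : Tendsto (fun p : G × G => p.1 - p.2) (𝓝 0 ×ˢ 𝓝 0) (𝓝 0) := by
    simpa [nhds_prod_eq] using continuous_sub.tendsto ((0 : G), (0 : G))
  obtain ⟨V, hV, hVU⟩ := mem_prod_self_iff.mp (hsub (hU.mem_nhds hU0))
  refine ⟨V, hV, fun y l ⟨hl, v, hv, hvl⟩ l' ⟨hl', v', hv', hvl'⟩ => ?_⟩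
  by_contra hne
  have hll' : l - l' ∈ U := by
    subst hvl hvl'
    simpa [vadd_eq_add] using hVU (Set.mk_mem_prod hv hv')
  exact Set.disjoint_left.mp (hdisj hl hl' hne) ⟨0, hU0, add_zero l⟩
    ⟨l - l', hll', add_sub_cancel l' l⟩

theorem UnifDiscrete.exists_encard_inter_vadd_le (hΛ : UnifDiscrete Λ) {C : Set G}
    (hC : IsCompact C) : ∃ N : ℕ, ∀ x : G, (Λ ∩ (x +ᵥ C)).encard ≤ N := by
  obtain ⟨V, hV, hsing⟩ := hΛ.exists_mem_nhds_subsingleton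
  obtain ⟨t, -, hcover⟩ := hC.elim_nhds_subcover (fun a => a +ᵥ V)
    fun a _ => by simpa using vadd_mem_nhds_vadd a hV
  refine ⟨t.card, fun x => ?_⟩
  have hsub : Λ ∩ (x +ᵥ C) ⊆ ⋃ a ∈ t, Λ ∩ ((x + a) +ᵥ V) := by
    rintro l ⟨hl, c, hc, rfl⟩
    obtain ⟨a, ha, hca⟩ := Set.mem_iUnion₂.mp (hcover hc)
    exact Set.mem_iUnion₂.mpr ⟨a, ha, hl, by rw [add_vadd]; exact Set.vadd_mem_vadd_set hca⟩
  calc (Λ ∩ (x +ᵥ C)).encard ≤ ∑ a ∈ t, (Λ ∩ ((x + a) +ᵥ V)).encard :=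
        (Set.encard_le_encard hsub).trans (t.set_encard_biUnion_le _)
    _ ≤ ∑ _a ∈ t, 1 := Finset.sum_le_sum fun a _ => Set.encard_le_one_iff.mpr
        fun l l' hl hl' => hsing _ hl hl'
    _ = t.card := by simp

theorem UnifDiscrete.finite_inter (hΛ : UnifDiscrete Λ) {L : Set G} (hL : IsCompact L) :
    (Λ ∩ L).Finite := by
  obtain ⟨N, hN⟩ := hΛ.exists_encard_inter_vadd_le hL
  exact Set.finite_of_encard_le_coe (by simpa using hN 0)

/-- If `Γ + C = G`, each point of `Λ ∩ L` lies in some `γ + C` with `γ ∈ Γ ∩ (-C + L)`. -/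
theorem UnifDiscrete.exists_ncard_inter_le_mul (hΛ : UnifDiscrete Λ) {Γ C : Set G}
    (hΓ : UnifDiscrete Γ) (hC : IsCompact C) (hcover : Γ + C = Set.univ) :
    ∃ N : ℕ, ∀ L : Set G, IsCompact L → (Λ ∩ L).ncard ≤ N * (Γ ∩ (-C + L)).ncard := by
  obtain ⟨N, hN⟩ := hΛ.exists_encard_inter_vadd_le hC
  refine ⟨N, fun L hL => ?_⟩
  have hS := hΓ.finite_inter (hC.neg.add hL)
  have hsub : Λ ∩ L ⊆ ⋃ γ ∈ hS.toFinset, Λ ∩ (γ +ᵥ C) := by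
    rintro l ⟨hl, hlL⟩
    obtain ⟨γ, hγ, c, hc, rfl⟩ : l ∈ Γ + C := hcover ▸ Set.mem_univ l
    refine Set.mem_iUnion₂.mpr ⟨γ, hS.mem_toFinset.mpr ⟨hγ, ?_⟩, hl, c, hc, rfl⟩
    exact ⟨-c, Set.neg_mem_neg.mpr hc, γ + c, hlL, neg_add_cancel_comm_assoc c γ⟩
  have hcount : (Λ ∩ L).encard ≤ (N * (Γ ∩ (-C + L)).ncard : ℕ) :=
    calc (Λ ∩ L).encard ≤ ∑ γ ∈ hS.toFinset, (Λ ∩ (γ +ᵥ C)).encard :=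
          (Set.encard_le_encard hsub).trans (Finset.set_encard_biUnion_le _ _)
      _ ≤ ∑ _γ ∈ hS.toFinset, (N : ℕ∞) := Finset.sum_le_sum fun γ _ => hN γ
      _ = (N * (Γ ∩ (-C + L)).ncard : ℕ) := by
        rw [Finset.sum_const, nsmul_eq_mul, Set.ncard_eq_toFinset_card _ hS]
        push_cast
        ring
  rw [← (hΛ.finite_inter hL).cast_ncard_eq] at hcount
  exact_mod_cast hcount

end UniformlyDiscrete

section CanonicalLattice

variable {d m : ℕ} {D : Type} [AddCommGroup D]

def latticeEmbedding (d m : ℕ) (D : Type) [AddCommGroup D] :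
    (Fin d → ℤ) × D →+ GrpG d m D where
  toFun z := (fun i => (z.1 i : ℝ), 0, z.2)
  map_zero' := by ext <;> simp
  map_add' z w := by ext <;> simp

theorem canonicalLattice_eq_range :
    canonicalLattice d m D = Set.range (latticeEmbedding d m D) := by
  ext p
  constructor
  · rintro ⟨hint, htor⟩
    choose z hz using hint
    exact ⟨(z, p.2.2), Prod.ext (funext fun i => (hz i).symm) (Prod.ext htor.symm rfl)⟩
  · rintro ⟨z, rfl⟩
    exact ⟨fun i => ⟨z.1 i, rfl⟩, rfl⟩

theorem zero_mem_canonicalLattice : (0 : GrpG d m D) ∈ canonicalLattice d m D :=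
  ⟨fun _ => ⟨0, Int.cast_zero.symm⟩, rfl⟩

theorem eq_zero_of_norm_intCast_lt_one {v : Fin d → ℤ} (hv : ‖fun i => (v i : ℝ)‖ < 1) :
    v = 0 := by
  funext i
  have hi : |(v i : ℝ)| < 1 := (norm_le_pi_norm (fun i => (v i : ℝ)) i).trans_lt hv
  exact Int.abs_lt_one_iff.mp (by exact_mod_cast hi)

theorem unifDiscrete_canonicalLattice [TopologicalSpace D] [DiscreteTopology D] :
    UnifDiscrete (canonicalLattice d m D) := by
  refine ⟨Metric.ball 0 (1 / 2) ×ˢ Set.univ ×ˢ {0},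
    Metric.isOpen_ball.prod (isOpen_univ.prod (isOpen_discrete _)), by simp, ?_⟩
  rw [canonicalLattice_eq_range]
  rintro _ ⟨z, rfl⟩ _ ⟨z', rfl⟩ hne
  refine Set.disjoint_left.mpr ?_
  rintro _ ⟨u, ⟨hu, -, hu0⟩, rfl⟩ ⟨u', ⟨hu', -, hu0'⟩, heq⟩
  have hw : latticeEmbedding d m D (z - z') = u' - u := by
    simp only [vadd_eq_add] at heq
    rw [map_sub, sub_eq_sub_iff_add_eq_add, ← heq, add_comm]
  refine hne (congrArg _ (sub_eq_zero.mp (Prod.ext (eq_zero_of_norm_intCast_lt_one ?_) ?_)))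
  · calc ‖(latticeEmbedding d m D (z - z')).1‖ = ‖u'.1 - u.1‖ := by rw [hw]; rfl
      _ ≤ ‖u'.1‖ + ‖u.1‖ := norm_sub_le _ _
      _ < 1 / 2 + 1 / 2 := add_lt_add (mem_ball_zero_iff.mp hu') (mem_ball_zero_iff.mp hu)
      _ = 1 := by norm_num
  · have := congrArg (fun p => p.2.2) hw
    simp only [Set.mem_singleton_iff] at hu0 hu0'
    simpa [latticeEmbedding, hu0, hu0'] using this

def unitCell (d m : ℕ) (D : Type) [AddCommGroup D] : Set (GrpG d m D) :=
  Set.Icc 0 1 ×ˢ Set.univ ×ˢ {0}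

theorem isCompact_unitCell [TopologicalSpace D] : IsCompact (unitCell d m D) :=
  isCompact_Icc.prod (isCompact_univ.prod isCompact_singleton)

theorem canonicalLattice_add_unitCell : canonicalLattice d m D + unitCell d m D = Set.univ := by
  refine Set.eq_univ_of_forall fun p => ⟨(fun i => (⌊p.1 i⌋ : ℝ), 0, p.2.2),
    ⟨fun i => ⟨_, rfl⟩, rfl⟩, (fun i => Int.fract (p.1 i), p.2.1, 0), ?_, ?_⟩
  · exact ⟨⟨fun i => Int.fract_nonneg _, fun i => (Int.fract_lt_one _).le⟩, trivial, rfl⟩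
  · ext <;> simp [Int.floor_add_fract]

theorem ncard_canonicalLattice_inter_le {L : Set (GrpG d m D)} {M : ℕ} {S : Finset D}
    (hL : ∀ p ∈ L, ‖p.1‖ ≤ M ∧ p.2.2 ∈ S) :
    (canonicalLattice d m D ∩ L).ncard ≤ (2 * M + 1) ^ d * S.card := by
  classical
  set T : Finset ((Fin d → ℤ) × D) := Finset.Icc (fun _ => -(M : ℤ)) (fun _ => M) ×ˢ S
  have hsub : canonicalLattice d m D ∩ L ⊆ T.image (latticeEmbedding d m D) := by
    rw [canonicalLattice_eq_range]
    rintro _ ⟨⟨z, rfl⟩, hz⟩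
    obtain ⟨hnorm, hS⟩ := hL _ hz
    have hzi : ∀ i, |(z.1 i : ℝ)| ≤ M := fun i =>
      (norm_le_pi_norm (fun i => (z.1 i : ℝ)) i).trans hnorm
    refine Finset.mem_coe.mpr (Finset.mem_image_of_mem _
      (Finset.mem_product.mpr ⟨Finset.mem_Icc.mpr ⟨fun i => ?_, fun i => ?_⟩, hS⟩))
    · exact neg_le_of_abs_le (by exact_mod_cast hzi i)
    · exact le_of_abs_le (by exact_mod_cast hzi i)
  calc (canonicalLattice d m D ∩ L).ncard ≤ (T.image (latticeEmbedding d m D)).card := by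
        rw [← Set.ncard_coe_finset]; exact Set.ncard_le_ncard hsub (Finset.finite_toSet _)
    _ ≤ T.card := Finset.card_image_le
    _ = (2 * M + 1) ^ d * S.card := by
        rw [Finset.card_product, Pi.card_Icc, Finset.prod_const, Int.card_Icc, Finset.card_univ,
          Fintype.card_fin]
        congr
        omega

theorem exists_ncard_canonicalLattice_inter_nsmul_le [TopologicalSpace D] [DiscreteTopology D]
    {K : Set (GrpG d m D)} (hK : IsCompact K) :
    ∃ A : ℝ, ∃ P : ℕ, ∀ n : ℕ,
      ((canonicalLattice d m D ∩ n • K).ncard : ℝ) ≤ A * (n + 1) ^ P := by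
  classical
  obtain ⟨C, hC⟩ := hK.exists_bound_of_continuousOn (f := fun p => p.1)
    continuous_fst.continuousOn
  set R := ⌈C⌉₊
  have hF := (hK.image continuous_snd.snd).finite_of_discrete
  set F := hF.toFinset
  have hbox : ∀ n : ℕ, ∀ p ∈ n • K, ‖p.1‖ ≤ (n * R : ℕ) ∧ p.2.2 ∈ n • F := by
    intro n
    induction n with
    | zero =>
      intro p hp
      rw [zero_nsmul, Set.mem_zero] at hp
      simp [hp]
    | succ n ih =>
      rw [succ_nsmul', succ_nsmul']
      rintro _ ⟨k, hk, q, hq, rfl⟩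
      obtain ⟨hq₁, hq₂⟩ := ih q hq
      refine ⟨?_, Finset.add_mem_add (hF.mem_toFinset.mpr ⟨k, hk, rfl⟩) hq₂⟩
      calc ‖k.1 + q.1‖ ≤ ‖k.1‖ + ‖q.1‖ := norm_add_le _ _
        _ ≤ R + (n * R : ℕ) := add_le_add ((hC k hk).trans (Nat.le_ceil C)) hq₁
        _ = ((n + 1) * R : ℕ) := by push_cast; ring
  refine ⟨(2 * R + 1) ^ d, d + F.card, fun n => ?_⟩
  have hcount := (ncard_canonicalLattice_inter_le (hbox n)).trans
    (Nat.mul_le_mul_left _ (F.card_nsmul_le_succ_pow_card n))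
  calc ((canonicalLattice d m D ∩ n • K).ncard : ℝ)
      ≤ (2 * (n * R : ℕ) + 1 : ℝ) ^ d * (n + 1) ^ F.card := by exact_mod_cast hcount
    _ ≤ ((2 * R + 1) * (n + 1)) ^ d * (n + 1) ^ F.card := by
        gcongr
        push_cast
        nlinarith [Nat.cast_nonneg (α := ℝ) R, Nat.cast_nonneg (α := ℝ) n]
    _ = (2 * R + 1) ^ d * (n + 1) ^ (d + F.card) := by rw [mul_pow, pow_add]; ring

theorem le_of_forall_mul_ncard_canonicalLattice_le [TopologicalSpace D] [DiscreteTopology D]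
    {K : Set (GrpG d m D)} (hK : IsCompact K) {c β : ℝ} (hβ : 0 ≤ β)
    (h : ∀ L, IsCompact L → c * (canonicalLattice d m D ∩ L).ncard ≤
      β * (canonicalLattice d m D ∩ (K + L)).ncard) : c ≤ β := by
  obtain ⟨A, P, hpoly⟩ := exists_ncard_canonicalLattice_inter_nsmul_le hK
  refine le_of_mul_le_mul_succ_of_le_mul_pow
    (a := fun n => (canonicalLattice d m D ∩ n • K).ncard) ?_ hβ (fun n => ?_) hpoly
  · rw [zero_nsmul, Set.inter_eq_right.mpr (Set.zero_subset.mpr zero_mem_canonicalLattice),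
      ← Set.singleton_zero, Set.ncard_singleton, Nat.cast_one]
    exact one_pos
  · simpa only [succ_nsmul'] using h _ (hK.nsmul n)

end CanonicalLattice

section Comparison

variable {d m : ℕ} {D : Type} [AddCommGroup D] [TopologicalSpace D] [DiscreteTopology D]
  {Λ : Set (GrpG d m D)}

theorem UnifDiscrete.exists_upperRel (hΛ : UnifDiscrete Λ) :
    ∃ β : ℝ, 0 ≤ β ∧ UpperRel d m D Λ β := by
  obtain ⟨N, hN⟩ := hΛ.exists_ncard_inter_le_mul unifDiscrete_canonicalLattice
    isCompact_unitCell canonicalLattice_add_unitCell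
  refine ⟨N, N.cast_nonneg, fun ε hε => ⟨_, isCompact_unitCell.neg, fun L hL => ?_⟩⟩
  calc (1 - ε) * ((Λ ∩ L).ncard : ℝ) ≤ (Λ ∩ L).ncard :=
        mul_le_of_le_one_left (Nat.cast_nonneg _) (by linarith)
    _ ≤ N * (canonicalLattice d m D ∩ (-unitCell d m D + L)).ncard := by exact_mod_cast hN L hL

theorem LowerRel.le_of_upperRel {α β : ℝ} (hlow : LowerRel d m D Λ α) (hβ : 0 ≤ β)
    (hup : UpperRel d m D Λ β) : α ≤ β := by
  have hε : ∀ ε ∈ Set.Ioo (0 : ℝ) 1, (1 - ε) ^ 2 * α ≤ β := by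
    rintro ε ⟨hε₀, hε₁⟩
    obtain ⟨K₁, hK₁, h₁⟩ := hlow ε hε₀
    obtain ⟨K₂, hK₂, h₂⟩ := hup ε hε₀
    refine le_of_forall_mul_ncard_canonicalLattice_le (hK₂.add hK₁) hβ fun L hL => ?_
    calc (1 - ε) ^ 2 * α * ((canonicalLattice d m D ∩ L).ncard : ℝ)
        = (1 - ε) * ((1 - ε) * α * (canonicalLattice d m D ∩ L).ncard) := by ring
      _ ≤ (1 - ε) * (Λ ∩ (K₁ + L)).ncard := mul_le_mul_of_nonneg_left (h₁ L hL) (by linarith)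
      _ ≤ β * (canonicalLattice d m D ∩ (K₂ + K₁ + L)).ncard := by
          rw [add_assoc]; exact h₂ _ (hK₁.add hL)
  have hlim : Tendsto (fun ε : ℝ => (1 - ε) ^ 2 * α) (𝓝[>] 0) (𝓝 α) := by
    refine tendsto_nhdsWithin_of_tendsto_nhds ?_
    exact ((continuous_const.sub continuous_id).pow 2 |>.mul continuous_const).tendsto' _ _
      (by simp)
  exact le_of_tendsto hlim (eventually_of_mem (Ioo_mem_nhdsGT one_pos) hε)

end Comparison

theorem lower_density_le_upper_density_lt_top_general (d m : ℕ) (D : Type)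
    [AddCommGroup D] [TopologicalSpace D] [DiscreteTopology D]
    (Λ : Set (GrpG d m D)) (hΛ : UnifDiscrete Λ) :
    ({α : ℝ | 0 ≤ α ∧ UpperRel d m D Λ α}).Nonempty ∧
    BddAbove {α : ℝ | 0 ≤ α ∧ LowerRel d m D Λ α} ∧
    sSup {α : ℝ | 0 ≤ α ∧ LowerRel d m D Λ α} ≤ sInf {α : ℝ | 0 ≤ α ∧ UpperRel d m D Λ α} := by
  obtain ⟨β₀, hβ₀, hup₀⟩ := hΛ.exists_upperRel
  have hle : ∀ α ∈ {α : ℝ | 0 ≤ α ∧ LowerRel d m D Λ α},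
      ∀ β ∈ {β : ℝ | 0 ≤ β ∧ UpperRel d m D Λ β}, α ≤ β :=
    fun α hα β hβ => hα.2.le_of_upperRel hβ.1 hβ.2
  exact ⟨⟨β₀, hβ₀, hup₀⟩, ⟨β₀, fun α hα => hle α hα β₀ ⟨hβ₀, hup₀⟩⟩,
    le_csInf ⟨β₀, hβ₀, hup₀⟩ fun β hβ => Real.sSup_le (fun α hα => hle α hα β hβ) hβ.1⟩

/-- For every uniformly discrete `Λ ⊆ G = ℝ^d × 𝕋^m × D` (with `G` non-compact) one has
`D⁻(Λ) ≤ D⁺(Λ) < ∞`: the set defining `D⁺(Λ)` is nonempty (so `D⁺(Λ) < ∞`), the set defining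
`D⁻(Λ)` is bounded above, and `D⁻(Λ) = sSup {α | αΓ₀ ⪯ Λ} ≤ sInf {α | Λ ⪯ αΓ₀} = D⁺(Λ)`. -/
theorem lower_density_le_upper_density_lt_top (d m : ℕ) (D : Type)
    [AddCommGroup D] [TopologicalSpace D] [DiscreteTopology D] [Countable D]
    (hnc : 1 ≤ d ∨ Infinite D)
    (Λ : Set (GrpG d m D)) (hΛ : UnifDiscrete Λ) :
    ({α : ℝ | 0 ≤ α ∧ UpperRel d m D Λ α}).Nonempty ∧
    BddAbove {α : ℝ | 0 ≤ α ∧ LowerRel d m D Λ α} ∧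
    sSup {α : ℝ | 0 ≤ α ∧ LowerRel d m D Λ α} ≤ sInf {α : ℝ | 0 ≤ α ∧ UpperRel d m D Λ α} :=
  lower_density_le_upper_density_lt_top_general d m D Λ hΛ
end
end
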